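/- Fix positive reals γ̄1, γ̄2, ζ̄1, ζ̄2 with γ̄1 ≠ ζ̄1 and γ̄2 ≠ ζ̄2. Let E1, E2, E'1, E'2, Z1, Z2 be mutually independent random variables, where Ei and E'i are exponentially distributed with mean γ̄i and Zi is exponentially distributed with mean ζ̄i. Set γi = Ei and κi = E'i + Zi. Fix R1, R2 > 0, B1, B2, Bsum > 0, T1, T2, Tsum > 0, and set T̂i = 2^{Ri/(Bi Ti)} − 1 and T̂sum = 2^{(R1+R2)/(Bsum Tsum)} − 1. Then P( {R1/(B1 log2(1+γ1)) > T1} ∪ {R2/(B2 log2(1+γ2)) > T2} ∪ {(R1+R2)/(Bsum · min(log2(1+κ1), log2(1+κ2))) > Tsum} ) = 1 − e^{−T̂1/γ̄1} · e^{−T̂2/γ̄2} · ∏_{i=1,2} (γ̄i e^{−T̂sum/γ̄i} − ζ̄i e^{−T̂sum/ζ̄i})/(γ̄i − ζ̄i). -/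

import Mathlib

open MeasureTheory ProbabilityTheory Real

/-- The law of an exponentially distributed random variable with mean `θ`: density
`t ↦ (1/θ)·exp(−t/θ)` w.r.t. Lebesgue measure on `[0, ∞)`, density `0` on `(−∞, 0)`. -/
noncomputable def expLaw (θ : ℝ) : Measure ℝ :=
  volume.withDensity fun t => ENNReal.ofReal (if 0 ≤ t then (1 / θ) * Real.exp (-t / θ) else 0)

/-- `X` is exponentially distributed with mean `θ` (under `μ`). -/
def IsExpMean {Ω : Type*} [MeasurableSpace Ω] (μ : Measure Ω) (X : Ω → ℝ) (θ : ℝ) : Prop :=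
  Measurable X ∧ μ.map X = expLaw θ

/-!
Off a null set all six variables are positive, and since `log` is increasing the outage event
is the complement of `{E1 ≥ T̂1} ∩ {E2 ≥ T̂2} ∩ {E1' + Z1 ≥ T̂sum} ∩ {E2' + Z2 ≥ T̂sum}`.
These four events depend on disjoint blocks of the six variables, hence are independent.
The first two have the exponential tails `e^{−T̂i/γ̄i}`; the tail of the sum `E'i + Zi` follows by
conditioning on `E'i`: `P(E' + Z ≥ t) = P(E' ≥ t) + ∫₀ᵗ (1/γ) e^{−x/γ} e^{−(t−x)/ζ} dx`.
-/

open Set Function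

lemma expLaw_eq_expMeasure (θ : ℝ) : expLaw θ = expMeasure θ⁻¹ := by
  refine congrArg volume.withDensity (funext fun t => ?_)
  change _ = exponentialPDF θ⁻¹ t
  simp only [exponentialPDF_eq, div_eq_inv_mul, mul_one, mul_neg]

lemma expLaw_eq_withDensity_restrict (θ : ℝ) :
    expLaw θ =
      (volume.restrict (Ici 0)).withDensity fun x => ENNReal.ofReal (θ⁻¹ * exp (-x / θ)) := by
  rw [← withDensity_indicator measurableSet_Ici]
  refine congrArg volume.withDensity (funext fun x => ?_)
  simp only [indicator_apply, mem_Ici, one_div, apply_ite ENNReal.ofReal, ENNReal.ofReal_zero]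

instance (θ : ℝ) : NullSingletonClass (expLaw θ) := by
  unfold expLaw
  infer_instance

lemma isProbabilityMeasure_expLaw {θ : ℝ} (hθ : 0 < θ) : IsProbabilityMeasure (expLaw θ) := by
  rw [expLaw_eq_expMeasure]
  exact isProbabilityMeasure_expMeasure (inv_pos.2 hθ)

lemma expLaw_Ici {θ : ℝ} (hθ : 0 < θ) (t : ℝ) :
    expLaw θ (Ici t) = ENNReal.ofReal (exp (-max t 0 / θ)) := by
  have := isProbabilityMeasure_expMeasure (inv_pos.2 hθ)
  rw [← measure_congr Ioi_ae_eq_Ici, ← compl_Iic, expLaw_eq_expMeasure,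
    prob_compl_eq_one_sub measurableSet_Iic, ← ofReal_cdf, cdf_expMeasure_eq (inv_pos.2 hθ)]
  split_ifs with ht
  · have hexp : exp (-(θ⁻¹ * t)) ≤ 1 := exp_le_one_iff.2 (by nlinarith [inv_pos.2 hθ])
    rw [max_eq_left ht, ← ENNReal.ofReal_one, ← ENNReal.ofReal_sub _ (sub_nonneg.2 hexp),
      sub_sub_cancel, neg_div, div_eq_inv_mul]
  · simp [max_eq_right (not_le.1 ht).le]

lemma integral_inv_mul_exp_mul_exp {γ ζ : ℝ} (hγ : γ ≠ 0) (hζ : ζ ≠ 0) (hne : γ ≠ ζ) (t : ℝ) :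
    ∫ x in (0)..t, γ⁻¹ * exp (-x / γ) * exp (-(t - x) / ζ)
      = ζ / (γ - ζ) * (exp (-t / γ) - exp (-t / ζ)) := by
  have hsub : γ - ζ ≠ 0 := sub_ne_zero.2 hne
  have hderiv (x : ℝ) : HasDerivAt (fun x => ζ / (γ - ζ) * (exp (-x / γ) * exp (-(t - x) / ζ)))
      (γ⁻¹ * exp (-x / γ) * exp (-(t - x) / ζ)) x := by
    have h1 : HasDerivAt (fun x => exp (-x / γ)) (exp (-x / γ) * (-1 / γ)) x :=
      ((hasDerivAt_id' x).neg.div_const γ).exp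
    have h2 : HasDerivAt (fun x => exp (-(t - x) / ζ)) (exp (-(t - x) / ζ) * (1 / ζ)) x := by
      simpa using (((hasDerivAt_id' x).const_sub t).neg.div_const ζ).exp
    refine ((h1.mul h2).const_mul (ζ / (γ - ζ))).congr_deriv ?_
    field_simp
    ring
  rw [intervalIntegral.integral_eq_sub_of_hasDerivAt (fun x _ => hderiv x)
    (by apply Continuous.intervalIntegrable; fun_prop)]
  simp only [sub_self, neg_zero, zero_div, exp_zero, mul_one, one_mul, sub_zero]
  ring

/-- `P(X + Y ≥ t)` for independent exponentials `X`, `Y` of distinct means `γ`, `ζ`. -/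
noncomputable def hypoexpTail (γ ζ t : ℝ) : ℝ :=
  (γ * exp (-t / γ) - ζ * exp (-t / ζ)) / (γ - ζ)

lemma expLaw_prod_real_le_add {γ ζ : ℝ} (hγ : 0 < γ) (hζ : 0 < ζ) (hne : γ ≠ ζ) {t : ℝ}
    (ht : 0 ≤ t) : ((expLaw γ).prod (expLaw ζ)).real {p | t ≤ p.1 + p.2} = hypoexpTail γ ζ t := by
  have := isProbabilityMeasure_expLaw hζ
  have hsection (x : ℝ) : expLaw ζ (Prod.mk x ⁻¹' {p : ℝ × ℝ | t ≤ p.1 + p.2})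
      = ENNReal.ofReal (exp (-max (t - x) 0 / ζ)) := by
    rw [← expLaw_Ici hζ]
    congr 1
    ext y
    exact (sub_le_iff_le_add' (a := t) (b := x) (c := y)).symm
  rw [measureReal_def, Measure.prod_apply (measurableSet_le measurable_const (by fun_prop)),
    lintegral_congr hsection, ← lintegral_add_compl _ measurableSet_Ici (μ := expLaw γ)]
  have htail : ∫⁻ x in Ici t, ENNReal.ofReal (exp (-max (t - x) 0 / ζ)) ∂expLaw γ
      = ENNReal.ofReal (exp (-t / γ)) := by
    rw [setLIntegral_congr_fun measurableSet_Ici (g := fun _ => 1) fun x (hx : t ≤ x) => by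
      simp [max_eq_right (sub_nonpos.2 hx)], setLIntegral_one, expLaw_Ici hγ, max_eq_left ht]
  have hbody : ∫⁻ x in (Ici t)ᶜ, ENNReal.ofReal (exp (-max (t - x) 0 / ζ)) ∂expLaw γ
      = ENNReal.ofReal (∫ x in (0)..t, γ⁻¹ * exp (-x / γ) * exp (-(t - x) / ζ)) := by
    rw [compl_Ici, expLaw_eq_withDensity_restrict, setLIntegral_withDensity_eq_setLIntegral_mul _
      (by fun_prop) (by fun_prop) measurableSet_Iio, Measure.restrict_restrict measurableSet_Iio,
      Iio_inter_Ici, intervalIntegral.integral_of_le ht, ← integral_Ico_eq_integral_Ioc,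
      ofReal_integral_eq_lintegral_ofReal]
    · refine setLIntegral_congr_fun measurableSet_Ico fun x hx => ?_
      rw [Pi.mul_apply, max_eq_left (sub_nonneg.2 hx.2.le), ← ENNReal.ofReal_mul (by positivity)]
    · exact (Continuous.integrableOn_Icc (by fun_prop)).mono_set Ico_subset_Icc_self
    · exact ae_of_all _ fun x => by positivity
  have hbody_nonneg : 0 ≤ ∫ x in (0)..t, γ⁻¹ * exp (-x / γ) * exp (-(t - x) / ζ) :=
    intervalIntegral.integral_nonneg ht fun x _ => by positivity
  rw [htail, hbody, ← ENNReal.ofReal_add (exp_pos _).le hbody_nonneg,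
    ENNReal.toReal_ofReal (by positivity), integral_inv_mul_exp_mul_exp hγ.ne' hζ.ne' hne,
    hypoexpTail]
  field_simp [sub_ne_zero.2 hne]
  ring

namespace IsExpMean

variable {Ω : Type*} [MeasurableSpace Ω] {μ : Measure Ω} {X Y : Ω → ℝ} {θ γ ζ t : ℝ}

lemma ae_pos (hθ : 0 < θ) (hX : IsExpMean μ X θ) : ∀ᵐ ω ∂μ, 0 < X ω := by
  have := isProbabilityMeasure_expLaw hθ
  have hpos : ∀ᵐ x ∂expLaw θ, 0 < x := (mem_ae_iff_prob_eq_one measurableSet_Ioi).2 <| by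
    rw [measure_congr Ioi_ae_eq_Ici, expLaw_Ici hθ]
    simp
  exact ae_of_ae_map hX.1.aemeasurable (hX.2 ▸ hpos)

lemma measureReal_preimage_Ici (hθ : 0 < θ) (hX : IsExpMean μ X θ) (ht : 0 ≤ t) :
    μ.real (X ⁻¹' Ici t) = exp (-t / θ) := by
  rw [← map_measureReal_apply hX.1 measurableSet_Ici, hX.2, measureReal_def, expLaw_Ici hθ,
    max_eq_left ht, ENNReal.toReal_ofReal (exp_pos _).le]

lemma measureReal_add_preimage_Ici [IsFiniteMeasure μ] (hγ : 0 < γ) (hζ : 0 < ζ) (hne : γ ≠ ζ)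
    (hX : IsExpMean μ X γ) (hY : IsExpMean μ Y ζ) (hXY : IndepFun X Y μ) (ht : 0 ≤ t) :
    μ.real ((X + Y) ⁻¹' Ici t) = hypoexpTail γ ζ t := by
  have hlaw : μ.map (fun ω => (X ω, Y ω)) = (expLaw γ).prod (expLaw ζ) := by
    rw [(indepFun_iff_map_prod_eq_prod_map_map hX.1.aemeasurable hY.1.aemeasurable).1 hXY,
      hX.2, hY.2]
  change μ.real ((fun ω => (X ω, Y ω)) ⁻¹' {p | t ≤ p.1 + p.2}) = _
  rw [← map_measureReal_apply (hX.1.prodMk hY.1) (measurableSet_le measurable_const (by fun_prop)),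
    hlaw, expLaw_prod_real_le_add hγ hζ hne ht]

end IsExpMean

namespace ProbabilityTheory

variable {Ω ι κ β γ : Type*} {mΩ : MeasurableSpace Ω} {μ : Measure Ω}

lemma iIndep.iIndep_biSup {m : ι → MeasurableSpace Ω} (h_le : ∀ i, m i ≤ mΩ) (h : iIndep m μ)
    {J : κ → Set ι} (hJ : Pairwise (Disjoint on J)) :
    iIndep (fun k => ⨆ i ∈ J k, m i) μ := by
  classical
  have := h.isProbabilityMeasure
  rw [iIndep_iff]
  intro S
  induction S using Finset.induction_on with
  | empty => simp
  | insert k S hk ih =>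
    intro A hA
    have hdisj : Disjoint (J k) (⋃ j ∈ S, J j) :=
      disjoint_iUnion₂_right.2 fun j hj => hJ (ne_of_mem_of_not_mem hj hk).symm
    have hrest : MeasurableSet[⨆ i ∈ ⋃ j ∈ S, J j, m i] (⋂ j ∈ S, A j) :=
      Finset.measurableSet_biInter S fun j hj =>
        (show ⨆ i ∈ J j, m i ≤ ⨆ i ∈ ⋃ j ∈ S, J j, m i from
          biSup_mono fun i hi => mem_iUnion₂.2 ⟨j, hj, hi⟩) _ (hA j (Finset.mem_insert_of_mem hj))
    rw [Finset.set_biInter_insert, Finset.prod_insert hk,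
      ← ih fun j hj => hA j (Finset.mem_insert_of_mem hj)]
    exact (Indep_iff _ _ μ).1 (indep_iSup_of_disjoint h_le h hdisj) _ _
      (hA k (Finset.mem_insert_self k S)) hrest

lemma measurable_biSup_comap [mβ : MeasurableSpace β] (f : ι → Ω → β) {s : Set ι} {i : ι}
    (hi : i ∈ s) : Measurable[⨆ j ∈ s, mβ.comap (f j)] (f i) :=
  (comap_measurable (f i)).mono (le_iSup₂ (f := fun j (_ : j ∈ s) => mβ.comap (f j)) i hi) le_rfl

lemma iIndepFun.of_measurable_biSup [mβ : MeasurableSpace β] [MeasurableSpace γ]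
    {f : ι → Ω → β} (hf : ∀ i, Measurable (f i)) (h : iIndepFun f μ)
    {J : κ → Set ι} (hJ : Pairwise (Disjoint on J)) {g : κ → Ω → γ}
    (hg : ∀ k, Measurable[⨆ i ∈ J k, mβ.comap (f i)] (g k)) : iIndepFun g μ := by
  rw [iIndepFun_iff_iIndep] at h ⊢
  exact iIndep_of_iIndep_of_le (iIndep.iIndep_biSup (fun i => (hf i).comap_le) h hJ)
    fun k => (hg k).comap_le

lemma iIndepFun.measureReal_compl_iInter_preimage [Fintype κ] [MeasurableSpace β]
    {G : κ → Ω → β} (h : iIndepFun G μ) (hG : ∀ k, Measurable (G k)) {s : κ → Set β}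
    (hs : ∀ k, MeasurableSet (s k)) :
    μ.real (⋂ k, G k ⁻¹' s k)ᶜ = 1 - ∏ k, μ.real (G k ⁻¹' s k) := by
  have := h.isProbabilityMeasure
  rw [probReal_compl_eq_one_sub (.iInter fun k => hG k (hs k)), measureReal_def,
    h.meas_iInter fun k => ⟨s k, hs k, rfl⟩, ENNReal.toReal_prod]
  rfl

lemma iIndepFun_two_sums_of_six [MeasurableSpace β] [Add β] [MeasurableAdd₂ β]
    {W₁ W₂ X₁ X₂ Y₁ Y₂ : Ω → β} (hm : ∀ i, Measurable (![W₁, W₂, X₁, X₂, Y₁, Y₂] i))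
    (h : iIndepFun ![W₁, W₂, X₁, X₂, Y₁, Y₂] μ) : iIndepFun ![W₁, W₂, X₁ + Y₁, X₂ + Y₂] μ := by
  set J : Fin 4 → Set (Fin 6) := fun k => ↑(![{0}, {1}, {2, 4}, {3, 5}] k : Finset (Fin 6))
  have hJ : Pairwise (Disjoint on J) := by
    simp only [J, Pairwise, onFun, Finset.disjoint_coe]
    decide
  refine h.of_measurable_biSup hm hJ fun k => ?_
  fin_cases k
  · exact measurable_biSup_comap _ (i := 0) (by simp [J])
  · exact measurable_biSup_comap _ (i := 1) (by simp [J])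
  · exact (measurable_biSup_comap _ (i := 2) (by simp [J])).add
      (measurable_biSup_comap _ (i := 4) (by simp [J]))
  · exact (measurable_biSup_comap _ (i := 3) (by simp [J])).add
      (measurable_biSup_comap _ (i := 5) (by simp [J]))

end ProbabilityTheory

/-- The paper's `T̂ = 2^{R/(BT)} − 1`. -/
noncomputable def rateThreshold (R B T : ℝ) : ℝ := 2 ^ (R / (B * T)) - 1

lemma rateThreshold_nonneg {R B T : ℝ} (hR : 0 ≤ R) (hB : 0 ≤ B) (hT : 0 ≤ T) :
    0 ≤ rateThreshold R B T :=
  sub_nonneg.2 (one_le_rpow one_le_two (by positivity))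

lemma lt_div_mul_logb_iff {R B T x : ℝ} (hB : 0 < B) (hT : 0 < T) (hx : 0 < x) :
    T < R / (B * logb 2 (1 + x)) ↔ x < rateThreshold R B T := by
  have hlog : 0 < logb 2 (1 + x) := logb_pos one_lt_two (by linarith)
  rw [rateThreshold, lt_div_iff₀ (by positivity), ← mul_assoc, mul_comm T,
    ← lt_div_iff₀' (by positivity), logb_lt_iff_lt_rpow one_lt_two (by linarith),
    lt_sub_iff_add_lt']

lemma lt_div_mul_min_logb_iff {R B T x y : ℝ} (hB : 0 < B) (hT : 0 < T) (hx : 0 < x)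
    (hy : 0 < y) :
    T < R / (B * min (logb 2 (1 + x)) (logb 2 (1 + y))) ↔
      x < rateThreshold R B T ∨ y < rateThreshold R B T := by
  have hmin : min (logb 2 (1 + x)) (logb 2 (1 + y)) = logb 2 (1 + min x y) := by
    rcases le_total x y with h | h
    · rw [min_eq_left h, min_eq_left (logb_le_logb_of_le one_lt_two (by linarith) (by linarith))]
    · rw [min_eq_right h, min_eq_right (logb_le_logb_of_le one_lt_two (by linarith) (by linarith))]
  rw [hmin, lt_div_mul_logb_iff hB hT (lt_min hx hy), min_lt_iff]

/-- **Delay outage rate (Theorem 2), explicit single-port case.**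
With `γi = Ei` and `κi = E'i + Zi` built from six mutually independent exponential random
variables (`Ei, E'i` of mean `γ̄i`, `Zi` of mean `ζ̄i`, `γ̄i ≠ ζ̄i`), the delay outage rate equals
`1 − e^{−T̂1/γ̄1} · e^{−T̂2/γ̄2} · ∏_{i=1,2} (γ̄i e^{−T̂sum/γ̄i} − ζ̄i e^{−T̂sum/ζ̄i})/(γ̄i − ζ̄i)`. -/
theorem delay_outage_rate_explicit
    {Ω : Type*} [MeasurableSpace Ω] (μ : Measure Ω) [IsProbabilityMeasure μ]
    (γm1 γm2 ζm1 ζm2 : ℝ) (hγm1 : 0 < γm1) (hγm2 : 0 < γm2) (hζm1 : 0 < ζm1) (hζm2 : 0 < ζm2)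
    (hne1 : γm1 ≠ ζm1) (hne2 : γm2 ≠ ζm2)
    (E1 E2 E1' E2' Z1 Z2 : Ω → ℝ)
    (hE1 : IsExpMean μ E1 γm1) (hE2 : IsExpMean μ E2 γm2)
    (hE1' : IsExpMean μ E1' γm1) (hE2' : IsExpMean μ E2' γm2)
    (hZ1 : IsExpMean μ Z1 ζm1) (hZ2 : IsExpMean μ Z2 ζm2)
    (hindep : iIndepFun ![E1, E2, E1', E2', Z1, Z2] μ)
    (R1 R2 B1 B2 Bsum T1 T2 Tsum : ℝ)
    (hR1 : 0 < R1) (hR2 : 0 < R2) (hB1 : 0 < B1) (hB2 : 0 < B2) (hBsum : 0 < Bsum)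
    (hT1 : 0 < T1) (hT2 : 0 < T2) (hTsum : 0 < Tsum) :
    (μ ({ω | R1 / (B1 * Real.logb 2 (1 + E1 ω)) > T1} ∪
        {ω | R2 / (B2 * Real.logb 2 (1 + E2 ω)) > T2} ∪
        {ω | (R1 + R2) /
              (Bsum * min (Real.logb 2 (1 + (E1' ω + Z1 ω)))
                          (Real.logb 2 (1 + (E2' ω + Z2 ω)))) > Tsum})).toReal =
      1 - Real.exp (-((2 : ℝ) ^ (R1 / (B1 * T1)) - 1) / γm1)
          * Real.exp (-((2 : ℝ) ^ (R2 / (B2 * T2)) - 1) / γm2)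
          * ((γm1 * Real.exp (-((2 : ℝ) ^ ((R1 + R2) / (Bsum * Tsum)) - 1) / γm1)
              - ζm1 * Real.exp (-((2 : ℝ) ^ ((R1 + R2) / (Bsum * Tsum)) - 1) / ζm1)) / (γm1 - ζm1))
          * ((γm2 * Real.exp (-((2 : ℝ) ^ ((R1 + R2) / (Bsum * Tsum)) - 1) / γm2)
              - ζm2 * Real.exp (-((2 : ℝ) ^ ((R1 + R2) / (Bsum * Tsum)) - 1) / ζm2)) / (γm2 - ζm2)) := by
  have hF : ∀ i, Measurable (![E1, E2, E1', E2', Z1, Z2] i) := by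
    intro i; fin_cases i
    exacts [hE1.1, hE2.1, hE1'.1, hE2'.1, hZ1.1, hZ2.1]
  set G : Fin 4 → Ω → ℝ := ![E1, E2, E1' + Z1, E2' + Z2]
  set a : Fin 4 → ℝ := ![rateThreshold R1 B1 T1, rateThreshold R2 B2 T2,
    rateThreshold (R1 + R2) Bsum Tsum, rateThreshold (R1 + R2) Bsum Tsum]
  have hG : iIndepFun G μ := iIndepFun_two_sums_of_six hF hindep
  have hGm : ∀ k, Measurable (G k) := by
    intro k; fin_cases k
    exacts [hE1.1, hE2.1, hE1'.1.add hZ1.1, hE2'.1.add hZ2.1]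
  have hsum : 0 ≤ rateThreshold (R1 + R2) Bsum Tsum :=
    rateThreshold_nonneg (by positivity) hBsum.le hTsum.le
  rw [← measureReal_def, measureReal_congr (t := (⋂ k, G k ⁻¹' Ici (a k))ᶜ),
    hG.measureReal_compl_iInter_preimage hGm fun k => measurableSet_Ici, Fin.prod_univ_four]
  · simp only [G, a, Matrix.cons_val_zero, Matrix.cons_val_one, Matrix.cons_val_two,
      Matrix.cons_val_three, Matrix.tail_cons, Matrix.head_cons]
    rw [hE1.measureReal_preimage_Ici hγm1 (rateThreshold_nonneg hR1.le hB1.le hT1.le),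
      hE2.measureReal_preimage_Ici hγm2 (rateThreshold_nonneg hR2.le hB2.le hT2.le),
      hE1'.measureReal_add_preimage_Ici hγm1 hζm1 hne1 hZ1
        (hindep.indepFun (i := 2) (j := 4) (by decide)) hsum,
      hE2'.measureReal_add_preimage_Ici hγm2 hζm2 hne2 hZ2
        (hindep.indepFun (i := 3) (j := 5) (by decide)) hsum]
    rfl
  · rw [Filter.eventuallyEq_set]
    filter_upwards [hE1.ae_pos hγm1, hE2.ae_pos hγm2, hE1'.ae_pos hγm1, hE2'.ae_pos hγm2,
      hZ1.ae_pos hζm1, hZ2.ae_pos hζm2] with ω h1 h2 h1' h2' hz1 hz2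
    simp [G, a, Fin.exists_fin_succ, or_assoc, lt_div_mul_logb_iff hB1 hT1 h1,
      lt_div_mul_logb_iff hB2 hT2 h2,
      lt_div_mul_min_logb_iff hBsum hTsum (add_pos h1' hz1) (add_pos h2' hz2)]
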